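/- arXiv:2311.06870 — 11 statements merged into one kernel-verified Lean document; each statement's English description precedes it below -/
import Mathlib

section
/- Let V be a finite-dimensional inner product space and B, C ⊆ V subspaces. Then B^⊥ ∩ (C ∩ (B ∩ C)^⊥)^⊥ = B^⊥ ∩ C^⊥. -/
open RealInnerProductSpace

namespace Submodule

variable {𝕜 E : Type*} [RCLike 𝕜] [NormedAddCommGroup E] [InnerProductSpace 𝕜 E]

theorem orthogonal_inf_orthogonal_inf_orthogonal_inf (B C : Submodule 𝕜 E)
    [(B ⊓ C).HasOrthogonalProjection] :
    Bᗮ ⊓ (C ⊓ (B ⊓ C)ᗮ)ᗮ = Bᗮ ⊓ Cᗮ :=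
  calc Bᗮ ⊓ (C ⊓ (B ⊓ C)ᗮ)ᗮ = Bᗮ ⊓ (B ⊓ C)ᗮ ⊓ ((B ⊓ C)ᗮ ⊓ C)ᗮ := by
        rw [inf_eq_left.2 (orthogonal_le inf_le_left), inf_comm C]
    _ = Bᗮ ⊓ (B ⊓ C ⊔ (B ⊓ C)ᗮ ⊓ C)ᗮ := by rw [inf_assoc, inf_orthogonal]
    _ = Bᗮ ⊓ Cᗮ := by rw [sup_orthogonal_inf_of_hasOrthogonalProjection inf_le_right]

end Submodule

/-- For subspaces `B C` of a finite-dimensional real inner product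
space `V`, `Bᗮ ⊓ (C ⊓ (B ⊓ C)ᗮ)ᗮ = Bᗮ ⊓ Cᗮ`. -/
theorem perp_inf_perp_eq {V : Type*} [NormedAddCommGroup V]
    [InnerProductSpace ℝ V] [FiniteDimensional ℝ V] (B C : Submodule ℝ V) :
    Bᗮ ⊓ (C ⊓ (B ⊓ C)ᗮ)ᗮ = Bᗮ ⊓ Cᗮ :=
  Submodule.orthogonal_inf_orthogonal_inf_orthogonal_inf B C
end

section
/- Let A, B, C ⊆ V be subspaces of a finite-dimensional inner product space V with B ⊆ A and C ⊆ A. Then (A ⊖ B) ⊖ (C ⊖ (B ∩ C)) = A ⊖ (B + C), where X ⊖ Y := X ∩ Y^⊥. -/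
/-! `C` splits as `(B ⊓ C) ⊔ (C ⊖ (B ⊓ C))`. A vector orthogonal to `B` is already orthogonal to
`B ⊓ C`, so it is orthogonal to `C ⊖ (B ⊓ C)` exactly when it is orthogonal to all of `C`. -/

namespace Submodule

variable {𝕜 E : Type*} [RCLike 𝕜] [NormedAddCommGroup E] [InnerProductSpace 𝕜 E]

theorem orthogonal_inf_orthogonal_inf_orthogonal_of_le {K C : Submodule 𝕜 E}
    [K.HasOrthogonalProjection] (h : K ≤ C) : Kᗮ ⊓ (C ⊓ Kᗮ)ᗮ = Cᗮ := by
  rw [inf_orthogonal, inf_comm C, sup_orthogonal_inf_of_hasOrthogonalProjection h]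

end Submodule

theorem ominus_ominus_eq_ominus_sup_general {V : Type*} [NormedAddCommGroup V]
    [InnerProductSpace ℝ V] [FiniteDimensional ℝ V] (A B C : Submodule ℝ V) :
    (A ⊓ Bᗮ) ⊓ (C ⊓ (B ⊓ C)ᗮ)ᗮ = A ⊓ (B ⊔ C)ᗮ := by
  have hB : Bᗮ ≤ (B ⊓ C)ᗮ := Submodule.orthogonal_le inf_le_left
  calc (A ⊓ Bᗮ) ⊓ (C ⊓ (B ⊓ C)ᗮ)ᗮ
      = A ⊓ (Bᗮ ⊓ ((B ⊓ C)ᗮ ⊓ (C ⊓ (B ⊓ C)ᗮ)ᗮ)) := by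
        rw [← inf_assoc Bᗮ, inf_eq_left.2 hB, inf_assoc]
    _ = A ⊓ (Bᗮ ⊓ Cᗮ) := by
        rw [Submodule.orthogonal_inf_orthogonal_inf_orthogonal_of_le inf_le_right]
    _ = A ⊓ (B ⊔ C)ᗮ := by rw [Submodule.inf_orthogonal]

/-- For subspaces `A B C` of a finite-dimensional real inner product
space `V` with `B ⊆ A` and `C ⊆ A`, and `X ⊖ Y := X ⊓ Yᗮ`, one has
`(A ⊖ B) ⊖ (C ⊖ (B ⊓ C)) = A ⊖ (B + C)`. -/
theorem ominus_ominus_eq_ominus_sup {V : Type*} [NormedAddCommGroup V]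
    [InnerProductSpace ℝ V] [FiniteDimensional ℝ V] (A B C : Submodule ℝ V)
    (hB : B ≤ A) (hC : C ≤ A) :
    (A ⊓ Bᗮ) ⊓ (C ⊓ (B ⊓ C)ᗮ)ᗮ = A ⊓ (B ⊔ C)ᗮ :=
  ominus_ominus_eq_ominus_sup_general A B C
end

section
/- Let A, B, C ⊆ V be subspaces of a finite-dimensional inner product space V with B ⊆ A and C ⊆ A. Then dim((A ⊖ B) ⊖ (C ⊖ (B ∩ C))) = (dim A − dim B) − (dim C − dim(B ∩ C)). -/
/-!
Write `X := A ⊖ B` and `D := C ⊖ (B ⊓ C)`, so that `dim X = dim A - dim B` and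
`dim D = dim C - dim (B ⊓ C)`. Since `Xᗮ = Aᗮ ⊔ B` and `B ≤ A`, the modular law gives
`C ⊓ Xᗮ = C ⊓ B`, which meets `D` trivially. Hence `X ⊔ Dᗮ = ⊤`, and the dimension formula for
`X ⊔ Dᗮ` and `X ⊓ Dᗮ` yields `dim (X ⊖ D) = dim X - dim D`.
-/

open Module

namespace Submodule

variable {𝕜 E : Type*} [RCLike 𝕜] [NormedAddCommGroup E] [InnerProductSpace 𝕜 E]

theorem orthogonal_sup_inf_of_le {A B : Submodule 𝕜 E} (hB : B ≤ A) : (Aᗮ ⊔ B) ⊓ A = B := by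
  rw [sup_comm, sup_inf_assoc_of_le _ hB, inf_comm, inf_orthogonal_eq_bot, sup_bot_eq]

variable [FiniteDimensional 𝕜 E]

theorem orthogonal_inf_orthogonal (K₁ K₂ : Submodule 𝕜 E) : (K₁ ⊓ K₂ᗮ)ᗮ = K₁ᗮ ⊔ K₂ := by
  rw [← orthogonal_orthogonal (K₁ᗮ ⊔ K₂), ← inf_orthogonal, orthogonal_orthogonal]

theorem finrank_inf_orthogonal_add_finrank {X D : Submodule 𝕜 E} (h : D ⊓ Xᗮ = ⊥) :
    finrank 𝕜 ↥(X ⊓ Dᗮ) + finrank 𝕜 D = finrank 𝕜 X := by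
  have hsup : X ⊔ Dᗮ = ⊤ := by
    rw [← orthogonal_eq_bot_iff, ← inf_orthogonal, orthogonal_orthogonal, inf_comm, h]
  have hdim := finrank_sup_add_finrank_inf_eq X Dᗮ
  rw [hsup, finrank_top, ← finrank_add_finrank_orthogonal D] at hdim
  omega

theorem inf_orthogonal_inf_orthogonal_eq_bot {A B C : Submodule 𝕜 E} (hB : B ≤ A) (hC : C ≤ A) :
    C ⊓ (B ⊓ C)ᗮ ⊓ (A ⊓ Bᗮ)ᗮ = ⊥ := by
  have hCB : C ⊓ (Aᗮ ⊔ B) = B ⊓ C := by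
    conv_rhs => rw [← orthogonal_sup_inf_of_le hB, inf_assoc, inf_eq_right.mpr hC, inf_comm]
  rw [orthogonal_inf_orthogonal, inf_right_comm, hCB, inf_orthogonal_eq_bot]

end Submodule

/-- For subspaces `A B C` of a finite-dimensional real inner product
space `V` with `B ⊆ A` and `C ⊆ A`, and `X ⊖ Y := X ⊓ Yᗮ`, one has
`dim ((A ⊖ B) ⊖ (C ⊖ (B ⊓ C))) = (dim A − dim B) − (dim C − dim (B ⊓ C))`. -/
theorem finrank_ominus_ominus {V : Type*} [NormedAddCommGroup V]
    [InnerProductSpace ℝ V] [FiniteDimensional ℝ V] (A B C : Submodule ℝ V)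
    (hB : B ≤ A) (hC : C ≤ A) :
    (Module.finrank ℝ ↥((A ⊓ Bᗮ) ⊓ (C ⊓ (B ⊓ C)ᗮ)ᗮ) : ℤ) =
      ((Module.finrank ℝ ↥A : ℤ) - Module.finrank ℝ ↥B) -
        ((Module.finrank ℝ ↥C : ℤ) - Module.finrank ℝ ↥(B ⊓ C)) := by
  have hX := Submodule.finrank_add_inf_finrank_orthogonal (𝕜 := ℝ) hB
  have hD := Submodule.finrank_add_inf_finrank_orthogonal (𝕜 := ℝ) (inf_le_right : B ⊓ C ≤ C)
  have hXD := Submodule.finrank_inf_orthogonal_add_finrank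
    (Submodule.inf_orthogonal_inf_orthogonal_eq_bot hB hC)
  rw [inf_comm Bᗮ] at hX
  rw [inf_comm (B ⊓ C)ᗮ] at hD
  omega
end

section
/- Let P and Q be finite posets, let f_• : P → Q and f^• : Q → P form a Galois connection (f_•(p) ≤ q iff p ≤ f^•(q)), let M be a commutative monoid, and let m : P → M be a function. If m' : P → M satisfies Σ_{a ≤ b} m'(a) = m(b) for all b ∈ P (i.e. m' is a monoidal Möbius inverse of m), then the pushforward (f_•)_♯ m' : Q → M, defined by (f_•)_♯ m'(q) = Σ_{p ∈ f_•⁻¹(q)} m'(p), is a monoidal Möbius inverse of the pullback (f^•)^♯ m : Q → M defined by q ↦ m(f^•(q)); that is, Σ_{q' ≤ q} (f_•)_♯ m'(q') = m(f^•(q)) for all q ∈ Q. -/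
open Finset

theorem GaloisConnection.filter_l_le_eq {P Q : Type*} [Preorder P] [Preorder Q] [Fintype P]
    [DecidableRel ((· ≤ ·) : P → P → Prop)] [DecidableRel ((· ≤ ·) : Q → Q → Prop)]
    {l : P → Q} {u : Q → P} (hgc : GaloisConnection l u) (q : Q) :
    univ.filter (fun p => l p ≤ q) = univ.filter (fun p => p ≤ u q) := by
  ext p
  simp [hgc p q]

/-- **Monoidal Rota Galois Connection Theorem.** Let `P, Q` be finite
posets, `(l, u)` a Galois connection between them, `M` a commutative monoid and
`m : P → M`. If `m' : P → M` is a monoidal Möbius inverse of `m`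
(`∑_{a ≤ b} m'(a) = m(b)` for all `b`), then the pushforward `l_♯ m'` is a monoidal
Möbius inverse of the pullback `u^♯ m`:
`∑_{q' ≤ q} l_♯ m'(q') = m (u q)` for all `q ∈ Q`. -/
theorem monoidal_RGCT {P Q M : Type*} [PartialOrder P] [PartialOrder Q]
    [Fintype P] [Fintype Q] [DecidableRel ((· ≤ ·) : P → P → Prop)] [DecidableRel ((· ≤ ·) : Q → Q → Prop)] [DecidableEq Q]
    [AddCommMonoid M]
    (l : P → Q) (u : Q → P) (hgc : GaloisConnection l u)
    (m m' : P → M)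
    (hm' : ∀ b : P, ∑ a ∈ Finset.univ.filter (fun a => a ≤ b), m' a = m b) :
    ∀ q : Q,
      ∑ q' ∈ Finset.univ.filter (fun q' => q' ≤ q),
        ∑ p ∈ Finset.univ.filter (fun p => l p = q'), m' p = m (u q) := by
  intro q
  calc ∑ q' ∈ univ.filter (fun q' => q' ≤ q), ∑ p ∈ univ.filter (fun p => l p = q'), m' p
      = ∑ p ∈ univ.filter (fun p => l p ≤ q), m' p := by
        rw [sum_fiberwise_eq_sum_filter]
        simp only [mem_filter, mem_univ, true_and]
    _ = ∑ p ∈ univ.filter (fun p => p ≤ u q), m' p := by rw [hgc.filter_l_le_eq q]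
    _ = m (u q) := hm' (u q)
end

section
/- Let V be a finite-dimensional vector space, I a finite set, and {W(i)}_{i∈I}, {U(i)}_{i∈I} two families of subspaces of V that are transversal to each other. Then the family {W(i) + U(i)}_{i∈I} is a transverse family: dim(Σ_{i∈I}(W(i)+U(i))) = Σ_{i∈I} dim(W(i)+U(i)). -/
open Module

namespace Submodule

variable {K V ι : Type*} [DivisionRing K] [AddCommGroup V] [Module K V] [FiniteDimensional K V]

theorem finrank_biSup_le_sum (X : ι → Submodule K V) (s : Finset ι) :
    finrank K ↥(⨆ i ∈ s, X i) ≤ ∑ i ∈ s, finrank K ↥(X i) := by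
  classical
  induction s using Finset.induction with
  | empty => simp
  | insert a s ha ih =>
    rw [Finset.iSup_insert, Finset.sum_insert ha]
    exact (finrank_add_le_finrank_add_finrank _ _).trans (Nat.add_le_add_left ih _)

theorem finrank_iSup_le_sum [Fintype ι] (X : ι → Submodule K V) :
    finrank K ↥(⨆ i, X i) ≤ ∑ i, finrank K ↥(X i) := by
  have hX : (⨆ i ∈ Finset.univ, X i) = ⨆ i, X i := by simp
  rw [← hX]
  exact finrank_biSup_le_sum X Finset.univ

end Submodule

/-- If the two families `{W(i)}_{i∈I}` and `{U(i)}_{i∈I}` of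
subspaces of a finite-dimensional vector space `V` are transversal to each other,
then the family `{W(i) + U(i)}_{i∈I}` is a transverse family:
`dim (Σ_i (W(i)+U(i))) = Σ_i dim (W(i)+U(i))`. -/
theorem sum_of_transversal_is_transverse {F V : Type*} [Field F] [AddCommGroup V]
    [Module F V] [FiniteDimensional F V] {I : Type*} [Fintype I]
    (W U : I → Submodule F V)
    (h : Module.finrank F ↥((⨆ i, W i) ⊔ ⨆ i, U i) =
      ∑ i, Module.finrank F ↥(W i) + ∑ i, Module.finrank F ↥(U i)) :
    Module.finrank F ↥(⨆ i, W i ⊔ U i) = ∑ i, Module.finrank F ↥(W i ⊔ U i) := by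
  refine (Submodule.finrank_iSup_le_sum _).antisymm ?_
  calc ∑ i, finrank F ↥(W i ⊔ U i)
      ≤ ∑ i, (finrank F ↥(W i) + finrank F ↥(U i)) :=
        Finset.sum_le_sum fun i _ => Submodule.finrank_add_le_finrank_add_finrank _ _
    _ = finrank F ↥((⨆ i, W i) ⊔ ⨆ i, U i) := by rw [Finset.sum_add_distrib, h]
    _ = finrank F ↥(⨆ i, W i ⊔ U i) := by rw [iSup_sup_eq]
end

section
/- Let R and S be finite posets, V a finite-dimensional vector space, and M₁ : R → gr(V), M₂ : S → gr(V) functions such that {M₁(r)}_{r∈R} and {M₂(s)}_{s∈S} are transverse families. Suppose h : R → S is an order-preserving map such that the pushforward h_♯M₁ is Möbius equivalent to M₂, i.e. Σ_{s' ≤ s} h_♯M₁(s') = Σ_{s' ≤ s} M₂(s') for all s ∈ S. Then for every s ∈ S, dim(M₂(s)) = Σ_{r ∈ h⁻¹(s)} dim(M₁(r)). -/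
/-!
Dimension is additive on a transverse family and on every subfamily of it, so taking `finrank`
of the Möbius equivalence turns it into `∑_{s' ≤ s} dim M₂ s' = ∑_{s' ≤ s} ∑_{h r = s'} dim M₁ r`
for every `s`. A function on a finite poset is determined by its sums over down-sets
(Möbius inversion), as one sees by well-founded induction.
-/

open Finset Module

theorem Submodule.finrank_biSup_le_sum_s12 {K V ι : Type*} [DivisionRing K] [AddCommGroup V]
    [Module K V] [FiniteDimensional K V] (M : ι → Submodule K V) (t : Finset ι) :
    finrank K ↥(⨆ i ∈ t, M i) ≤ ∑ i ∈ t, finrank K ↥(M i) := by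
  classical
  induction t using Finset.induction_on with
  | empty => simp
  | insert a t ha ih =>
    rw [Finset.iSup_insert, sum_insert ha]
    exact (Submodule.finrank_add_le_finrank_add_finrank _ _).trans (by omega)

theorem Submodule.finrank_biSup_eq_sum_of_finrank_iSup_eq_sum {K V ι : Type*} [DivisionRing K]
    [AddCommGroup V] [Module K V] [FiniteDimensional K V] [Fintype ι] (M : ι → Submodule K V)
    (hM : finrank K ↥(⨆ i, M i) = ∑ i, finrank K ↥(M i)) (t : Finset ι) :
    finrank K ↥(⨆ i ∈ t, M i) = ∑ i ∈ t, finrank K ↥(M i) := by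
  classical
  -- subadditivity on `t` and on `tᶜ` can only be tight for the whole family if it is tight on both
  have hsplit : (⨆ i, M i) = (⨆ i ∈ t, M i) ⊔ (⨆ i ∈ tᶜ, M i) := by
    rw [← Finset.iSup_union, union_compl]; simp
  have hle := finrank_biSup_le_sum_s12 M t
  have hle_compl := finrank_biSup_le_sum_s12 M tᶜ
  have hsup := finrank_add_le_finrank_add_finrank (⨆ i ∈ t, M i) (⨆ i ∈ tᶜ, M i)
  rw [← hsplit, hM, ← sum_add_sum_compl t] at hsup
  omega

theorem Finset.biSup_fiberwise_eq_biSup_filter {α ι κ : Type*} [CompleteLattice α] [DecidableEq κ]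
    (s : Finset ι) (t : Finset κ) (g : ι → κ) (f : ι → α) :
    ⨆ j ∈ t, ⨆ i ∈ s.filter (g · = j), f i = ⨆ i ∈ s.filter (g · ∈ t), f i := by
  apply le_antisymm <;> simp only [iSup_le_iff, mem_filter, and_imp]
  · rintro _ hj i hi rfl
    exact le_iSup₂_of_le i ⟨hi, hj⟩ le_rfl
  · intro i hi hgi
    exact le_iSup₂_of_le (g i) hgi (le_iSup₂_of_le i ⟨hi, rfl⟩ le_rfl)

theorem Finset.eq_of_sum_filter_le_eq {S M : Type*} [PartialOrder S] [Fintype S]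
    [DecidableRel ((· ≤ ·) : S → S → Prop)] [AddCancelCommMonoid M] {a b : S → M}
    (hab : ∀ s, ∑ s' ∈ univ.filter (· ≤ s), a s' = ∑ s' ∈ univ.filter (· ≤ s), b s') :
    a = b := by
  classical
  funext s
  induction s using WellFoundedLT.induction with
  | _ s ih =>
    have hdown : univ.filter (· ≤ s) = insert s (univ.filter (· < s)) := by
      ext x
      simp [le_iff_lt_or_eq, or_comm]
    have hstrict : ∑ s' ∈ univ.filter (· < s), a s' = ∑ s' ∈ univ.filter (· < s), b s' :=
      sum_congr rfl fun s' hs' => ih s' (mem_filter.1 hs').2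
    have hs := hab s
    rw [hdown, sum_insert (by simp), sum_insert (by simp), hstrict] at hs
    exact add_right_cancel hs

theorem dim_pushforward_of_mobius_equivalent_general {F V : Type*} [Field F] [AddCommGroup V]
    [Module F V] [FiniteDimensional F V]
    {R S : Type*} [PartialOrder S] [Fintype R] [Fintype S]
    [DecidableEq S] [DecidableRel ((· ≤ ·) : S → S → Prop)]
    (M₁ : R → Submodule F V) (M₂ : S → Submodule F V)
    (hM₁ : Module.finrank F ↥(⨆ r, M₁ r) = ∑ r, Module.finrank F ↥(M₁ r))
    (hM₂ : Module.finrank F ↥(⨆ s, M₂ s) = ∑ s, Module.finrank F ↥(M₂ s))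
    (h : R → S)
    (hequiv : ∀ s : S,
      (⨆ s' ∈ Finset.univ.filter (fun s' => s' ≤ s),
        ⨆ r ∈ Finset.univ.filter (fun r => h r = s'), M₁ r) =
      ⨆ s' ∈ Finset.univ.filter (fun s' => s' ≤ s), M₂ s') :
    ∀ s : S, Module.finrank F ↥(M₂ s) =
      ∑ r ∈ Finset.univ.filter (fun r => h r = s), Module.finrank F ↥(M₁ r) := by
  refine congrFun (eq_of_sum_filter_le_eq fun s => ?_)
  calc ∑ s' ∈ univ.filter (· ≤ s), finrank F ↥(M₂ s')
      = finrank F ↥(⨆ s' ∈ univ.filter (· ≤ s), M₂ s') :=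
        (Submodule.finrank_biSup_eq_sum_of_finrank_iSup_eq_sum M₂ hM₂ _).symm
    _ = finrank F ↥(⨆ r ∈ univ.filter (h · ∈ univ.filter (· ≤ s)), M₁ r) := by
        rw [← hequiv s, biSup_fiberwise_eq_biSup_filter]
    _ = ∑ r ∈ univ.filter (h · ∈ univ.filter (· ≤ s)), finrank F ↥(M₁ r) :=
        Submodule.finrank_biSup_eq_sum_of_finrank_iSup_eq_sum M₁ hM₁ _
    _ = ∑ s' ∈ univ.filter (· ≤ s), ∑ r ∈ univ.filter (h · = s'), finrank F ↥(M₁ r) :=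
        (sum_fiberwise_eq_sum_filter _ _ _ _).symm

/-- Let `R, S` be finite posets, `V` a finite-dimensional vector
space, and `M₁ : R → gr(V)`, `M₂ : S → gr(V)` with `{M₁(r)}` and `{M₂(s)}` transverse
families. If `h : R → S` is order-preserving and the pushforward `h_♯M₁` is Möbius
equivalent to `M₂` (the sums of values over every down-set agree), then for every
`s ∈ S`, `dim (M₂ s) = Σ_{r ∈ h⁻¹(s)} dim (M₁ r)`. -/
theorem dim_pushforward_of_mobius_equivalent {F V : Type*} [Field F] [AddCommGroup V]
    [Module F V] [FiniteDimensional F V]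
    {R S : Type*} [PartialOrder R] [PartialOrder S] [Fintype R] [Fintype S]
    [DecidableEq S] [DecidableRel ((· ≤ ·) : S → S → Prop)]
    (M₁ : R → Submodule F V) (M₂ : S → Submodule F V)
    (hM₁ : Module.finrank F ↥(⨆ r, M₁ r) = ∑ r, Module.finrank F ↥(M₁ r))
    (hM₂ : Module.finrank F ↥(⨆ s, M₂ s) = ∑ s, Module.finrank F ↥(M₂ s))
    (h : R → S) (hmono : Monotone h)
    (hequiv : ∀ s : S,
      (⨆ s' ∈ Finset.univ.filter (fun s' => s' ≤ s),
        ⨆ r ∈ Finset.univ.filter (fun r => h r = s'), M₁ r) =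
      ⨆ s' ∈ Finset.univ.filter (fun s' => s' ≤ s), M₂ s') :
    ∀ s : S, Module.finrank F ↥(M₂ s) =
      ∑ r ∈ Finset.univ.filter (fun r => h r = s), Module.finrank F ↥(M₁ r) :=
  dim_pushforward_of_mobius_equivalent_general M₁ M₂ hM₁ hM₂ h hequiv
end

section
/- Let P = {p₁ < ⋯ < pₙ} be a finite linear order, V a finite-dimensional inner product space, and F̄ : Int(P) → gr(V) an intersection-monotone space function: F̄ is monotone with respect to the product order on intervals, and F̄([p_{i+1}, p_j]) ∩ F̄([p_i, p_{j+1}]) = F̄([p_i, p_j]) for all 1 ≤ i < j ≤ n (with [p_i, p_{n+1}] := [p_i, ∞)). Define the ×-Orthogonal Inverse OI F̄ by OI F̄([p_i, p_j]) := (F̄([p_i,p_j]) ⊖ F̄([p_i,p_{j−1}])) ⊖ (F̄([p_{i−1},p_j]) ⊖ F̄([p_{i−1},p_{j−1}])) (with the boundary conventions that terms with index 0 are the zero subspace), where X ⊖ Y := X ∩ Y^⊥. Then OI F̄ is a monoidal Möbius inverse of F̄: for every interval J ∈ Int(P), Σ_{I ≤_× J} OI F̄(I) = F̄(J), where I ≤_×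 J is the product order on intervals. -/
/-!
Fix a row `a` of the grid of intervals. Going right along it, each new `OI a (j+1)` is exactly
what is missing from `F a j ⊔ F (a-1) (j+1)` to fill up `F a (j+1)`, because its two orthogonal
cuts remove `F a j` and the new part of the row below. Hence the orthogonal inverses of a row
add up to `F a d` modulo the row below, `F (a-1) d`, and summing over the rows telescopes down
to `F 0 d = ⊥`.
-/

open Finset

theorem iSup_Icc_one_eq_of_sup_eq {α : Type*} [CompleteLattice α] (G R : ℕ → α) (h0 : G 0 = ⊥)
    (c : ℕ) (hstep : ∀ a, 1 ≤ a → a ≤ c → G (a - 1) ⊔ R a = G a) :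
    ⨆ a ∈ Icc 1 c, R a = G c := by
  induction c with
  | zero => simp [h0]
  | succ c ih =>
    rw [← insert_Icc_right_eq_Icc_add_one (by omega), Finset.iSup_insert, sup_comm,
      ih fun a ha hac => hstep a ha (by omega)]
    simpa using hstep (c + 1) (by omega) le_rfl

namespace Submodule

variable {𝕜 E : Type*} [RCLike 𝕜] [NormedAddCommGroup E] [InnerProductSpace 𝕜 E]

theorem sup_sup_inf_orthogonal_inf_orthogonal_eq {W X Y Z : Submodule 𝕜 E}
    [Z.HasOrthogonalProjection] [(X ⊔ Y).HasOrthogonalProjection]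
    (hZX : Z ≤ X) (hZY : Z ≤ Y) (hXW : X ≤ W) (hYW : Y ≤ W) :
    X ⊔ Y ⊔ W ⊓ Xᗮ ⊓ (Y ⊓ Zᗮ)ᗮ = W := by
  -- `Y ⊓ Zᗮ` still spans `Y` modulo `Z ≤ X`, so the two cuts remove exactly `X ⊔ Y`.
  have hspan : X ⊔ Y ⊓ Zᗮ = X ⊔ Y := by
    calc X ⊔ Y ⊓ Zᗮ = X ⊔ Z ⊔ Zᗮ ⊓ Y := by rw [sup_eq_left.mpr hZX, inf_comm]
      _ = X ⊔ Y := by rw [sup_assoc, sup_orthogonal_inf_of_hasOrthogonalProjection hZY]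
  rw [inf_assoc, inf_orthogonal, hspan, inf_comm]
  exact sup_orthogonal_inf_of_hasOrthogonalProjection (sup_le hXW hYW)

theorem sup_iSup_Icc_eq_of_orthogonal_inversion [FiniteDimensional 𝕜 E]
    (X Y D : ℕ → Submodule 𝕜 E) {c d : ℕ} (hcd : c ≤ d)
    (hX : MonotoneOn X (Set.Icc c d)) (hY : MonotoneOn Y (Set.Icc c d))
    (hYX : ∀ j ∈ Set.Icc c d, Y j ≤ X j)
    (hDc : D c = X c ⊓ (Y c)ᗮ)
    (hD : ∀ j, c < j → D j = X j ⊓ (X (j - 1))ᗮ ⊓ (Y j ⊓ (Y (j - 1))ᗮ)ᗮ) :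
    Y d ⊔ ⨆ j ∈ Icc c d, D j = X d := by
  induction d, hcd using Nat.le_induction with
  | base =>
    rw [Icc_self, Finset.iSup_singleton, hDc, inf_comm]
    exact sup_orthogonal_inf_of_hasOrthogonalProjection (hYX c ⟨le_rfl, le_rfl⟩)
  | succ d hcd ih =>
    have hsub : Set.Icc c d ⊆ Set.Icc c (d + 1) := Set.Icc_subset_Icc_right (by omega)
    have hd : d ∈ Set.Icc c (d + 1) := ⟨hcd, by omega⟩
    have hd1 : d + 1 ∈ Set.Icc c (d + 1) := ⟨by omega, le_rfl⟩
    have hrow := ih (hX.mono hsub) (hY.mono hsub) fun j hj => hYX j (hsub hj)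
    have hYd : Y d ≤ Y (d + 1) := hY hd hd1 (by omega)
    rw [← insert_Icc_right_eq_Icc_add_one (by omega), Finset.iSup_insert, hD (d + 1) (by omega),
      Nat.add_sub_cancel]
    calc Y (d + 1) ⊔ (X (d + 1) ⊓ (X d)ᗮ ⊓ (Y (d + 1) ⊓ (Y d)ᗮ)ᗮ ⊔ ⨆ j ∈ Icc c d, D j)
        = X d ⊔ Y (d + 1) ⊔ X (d + 1) ⊓ (X d)ᗮ ⊓ (Y (d + 1) ⊓ (Y d)ᗮ)ᗮ := by
          rw [← hrow, ← sup_eq_left.mpr hYd]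
          ac_rfl
      _ = X (d + 1) :=
          sup_sup_inf_orthogonal_inf_orthogonal_eq (hYX d hd) hYd (hX hd hd1 (by omega))
            (hYX (d + 1) hd1)

end Submodule

section IntervalGrid

variable {α : Type*} [Preorder α] [OrderBot α] {n : ℕ} {F : ℕ → ℕ → α}

theorem le_of_le_of_le_of_row_zero_eq_bot (hzero : ∀ b, F 0 b = ⊥)
    (hmono : ∀ a b c d, 1 ≤ a → a ≤ b → b ≤ n + 1 → a ≤ n →
      1 ≤ c → c ≤ d → d ≤ n + 1 → c ≤ n → a ≤ c → b ≤ d → F a b ≤ F c d)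
    {a b a' b' : ℕ} (ha : a ≤ a') (hb : b ≤ b') (hab : a' ≤ b) (ha' : a' ≤ n) (hb' : b' ≤ n + 1) :
    F a b ≤ F a' b' := by
  rcases Nat.eq_zero_or_pos a with rfl | ha0
  · simp [hzero]
  · exact hmono a b a' b' ha0 (by omega) (by omega) (by omega) (by omega) (by omega) hb' ha' ha hb

theorem rows_monotoneOn_of_row_zero_eq_bot (hzero : ∀ b, F 0 b = ⊥)
    (hmono : ∀ a b c d, 1 ≤ a → a ≤ b → b ≤ n + 1 → a ≤ n →
      1 ≤ c → c ≤ d → d ≤ n + 1 → c ≤ n → a ≤ c → b ≤ d → F a b ≤ F c d)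
    {a d : ℕ} (han : a ≤ n) (hdn : d ≤ n + 1) :
    MonotoneOn (F a) (Set.Icc a d) ∧ MonotoneOn (F (a - 1)) (Set.Icc a d) ∧
      ∀ j ∈ Set.Icc a d, F (a - 1) j ≤ F a j := by
  refine ⟨fun i ⟨hai, _⟩ j ⟨_, hjd⟩ hij => ?_, fun i ⟨hai, _⟩ j ⟨_, hjd⟩ hij => ?_,
    fun j ⟨haj, hjd⟩ => ?_⟩
  · exact le_of_le_of_le_of_row_zero_eq_bot hzero hmono le_rfl hij hai han (by omega)
  · exact le_of_le_of_le_of_row_zero_eq_bot hzero hmono le_rfl hij (by omega) (by omega) (by omega)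
  · exact le_of_le_of_le_of_row_zero_eq_bot hzero hmono (by omega) le_rfl haj han (by omega)

end IntervalGrid

/-- The interval `[p_a, p_b]` is the pair `(a, b)`, with `b = n + 1` standing for `[p_a, ∞)`;
row `0` carries the boundary convention. -/
theorem orthogonal_inversion_is_monoidal_mobius_inverse_general
    {V : Type*} [NormedAddCommGroup V] [InnerProductSpace ℝ V] [FiniteDimensional ℝ V]
    (n : ℕ) (F : ℕ → ℕ → Submodule ℝ V)
    (hzero : ∀ b, F 0 b = ⊥)
    (hmono : ∀ a b c d, 1 ≤ a → a ≤ b → b ≤ n + 1 → a ≤ n →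
      1 ≤ c → c ≤ d → d ≤ n + 1 → c ≤ n → a ≤ c → b ≤ d → F a b ≤ F c d)
    (OI : ℕ → ℕ → Submodule ℝ V)
    (hOI : ∀ i j, OI i j =
      if i = j then F i i ⊓ (F (i - 1) i)ᗮ
      else (F i j ⊓ (F i (j - 1))ᗮ) ⊓ ((F (i - 1) j ⊓ (F (i - 1) (j - 1))ᗮ))ᗮ) :
    ∀ c d, 1 ≤ c → c ≤ d → d ≤ n + 1 → c ≤ n →
      (⨆ a ∈ Finset.Icc 1 c, ⨆ b ∈ Finset.Icc a d, OI a b) = F c d := by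
  intro c d _ hcd hdn hcn
  refine iSup_Icc_one_eq_of_sup_eq (F · d) _ (hzero d) c fun a _ hac => ?_
  obtain ⟨hX, hY, hYX⟩ := rows_monotoneOn_of_row_zero_eq_bot hzero hmono (a := a) (by omega) hdn
  exact Submodule.sup_iSup_Icc_eq_of_orthogonal_inversion (F a) (F (a - 1)) (OI a) (by omega)
    hX hY hYX (by rw [hOI, if_pos rfl]) fun j hj => by rw [hOI, if_neg hj.ne]

/-- Let `P = {p₁ < ⋯ < pₙ}` be a finite linear order and
`F̄ : Int(P) → gr(V)` an intersection-monotone space function valued in the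
subspaces of a finite-dimensional real inner product space `V`.  We encode the
intervals of `P` as pairs `(a, b)` of natural numbers with `1 ≤ a ≤ b ≤ n + 1`
and `a ≤ n`, where `b = n + 1` encodes the interval `[p_a, ∞)`; index-`0` values
are the zero subspace (the boundary convention).  The `×`-Orthogonal Inverse
`OI F̄([p_i, p_j]) = (F̄([p_i,p_j]) ⊖ F̄([p_i,p_{j−1}])) ⊖ (F̄([p_{i−1},p_j]) ⊖
F̄([p_{i−1},p_{j−1}]))` (with `OI F̄([p_i,p_i]) = F̄([p_i,p_i]) ⊖ F̄([p_{i−1},p_i])`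
on the diagonal), where `X ⊖ Y := X ⊓ Yᗮ`, is a monoidal Möbius inverse of `F̄`:
for every interval `J`, the sum (supremum) of `OI F̄(I)` over all intervals
`I ≤_× J` equals `F̄(J)`. -/
theorem orthogonal_inversion_is_monoidal_mobius_inverse
    {V : Type*} [NormedAddCommGroup V] [InnerProductSpace ℝ V] [FiniteDimensional ℝ V]
    (n : ℕ) (hn : 1 ≤ n) (F : ℕ → ℕ → Submodule ℝ V)
    (hzero : ∀ b, F 0 b = ⊥)
    (hmono : ∀ a b c d, 1 ≤ a → a ≤ b → b ≤ n + 1 → a ≤ n →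
      1 ≤ c → c ≤ d → d ≤ n + 1 → c ≤ n → a ≤ c → b ≤ d → F a b ≤ F c d)
    (hint : ∀ i j, 1 ≤ i → i < j → j ≤ n → F (i + 1) j ⊓ F i (j + 1) = F i j)
    (OI : ℕ → ℕ → Submodule ℝ V)
    (hOI : ∀ i j, OI i j =
      if i = j then F i i ⊓ (F (i - 1) i)ᗮ
      else (F i j ⊓ (F i (j - 1))ᗮ) ⊓ ((F (i - 1) j ⊓ (F (i - 1) (j - 1))ᗮ))ᗮ) :
    ∀ c d, 1 ≤ c → c ≤ d → d ≤ n + 1 → c ≤ n →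
      (⨆ a ∈ Finset.Icc 1 c, ⨆ b ∈ Finset.Icc a d, OI a b) = F c d :=
  orthogonal_inversion_is_monoidal_mobius_inverse_general n F hzero hmono OI hOI
end

section
/- Let P = {p₁ < ⋯ < pₙ} be a finite linear order, V a finite-dimensional inner product space, and F̄ : Int(P) → gr(V) an intersection-monotone space function. Then the family {OI F̄(I)}_{I ∈ Int(P)} of values of its ×-Orthogonal Inverse is a transverse family: dim(Σ_{I ∈ Int(P)} OI F̄(I)) = Σ_{I ∈ Int(P)} dim(OI F̄(I)). -/
/-!
Fix a row `r`. By induction on `b`, the sum of `OI F̄(r, b')` over `r ≤ b' ≤ b` is transverse and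
is a complement of `F̄(r-1, b)` in `F̄(r, b)`. The new term `OI F̄(r, b+1)` is orthogonal to
`F̄(r, b)` and, since `F̄(r-1, b+1)` is `F̄(r-1, b)` plus its orthogonal increment, also to
`F̄(r-1, b+1)`. The intersection property `F̄(r, b) ∩ F̄(r-1, b+1) = F̄(r-1, b)` says that the
increment of row `r-1` meets `(F̄(r, b+1) ⊖ F̄(r, b))ᗮ` trivially, so removing it from the
increment of row `r` costs exactly its dimension, and the dimensions add up. For `b = n + 1` the
rows are successive complements in the chain `0 = F̄(0, n+1) ≤ F̄(1, n+1) ≤ ⋯ ≤ F̄(n, n+1)`, so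
the whole family is transverse.
-/

open Module Submodule Finset

section Transverse

variable {K V ι : Type*} [DivisionRing K] [AddCommGroup V] [Module K V]

def IsTransverse (s : Finset ι) (p : ι → Submodule K V) : Prop :=
  finrank K ↥(⨆ i ∈ s, p i) = ∑ i ∈ s, finrank K ↥(p i)

theorem isTransverse_singleton (a : ι) (p : ι → Submodule K V) : IsTransverse {a} p := by
  rw [IsTransverse, Finset.iSup_singleton, sum_singleton]

variable [FiniteDimensional K V]

theorem Submodule.finrank_sup_of_disjoint {p q : Submodule K V} (h : Disjoint p q) :
    finrank K ↥(p ⊔ q) = finrank K ↥p + finrank K ↥q := by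
  rw [← finrank_sup_add_finrank_inf_eq, h.eq_bot, finrank_bot, add_zero]

theorem IsTransverse.insert [DecidableEq ι] {s : Finset ι} {p : ι → Submodule K V} {a : ι}
    (ha : a ∉ s) (hs : IsTransverse s p) (hd : Disjoint (p a) (⨆ i ∈ s, p i)) :
    IsTransverse (insert a s) p := by
  rw [IsTransverse, Finset.iSup_insert, finrank_sup_of_disjoint hd, sum_insert ha, hs]

theorem isTransverse_Icc_of_sup_eq {S C : ℕ → Submodule K V} (hC : C 0 = ⊥) {m : ℕ}
    (hdisj : ∀ a < m, Disjoint (S (a + 1)) (C a)) (hsup : ∀ a < m, S (a + 1) ⊔ C a = C (a + 1)) :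
    (⨆ a ∈ Icc 1 m, S a) = C m ∧ IsTransverse (Icc 1 m) S := by
  induction m with
  | zero => simp [hC, IsTransverse]
  | succ m ih =>
    obtain ⟨hSC, hT⟩ := ih (fun a ha => hdisj a (by omega)) (fun a ha => hsup a (by omega))
    rw [← insert_Icc_right_eq_Icc_add_one (by omega), Finset.iSup_insert, hSC]
    exact ⟨hsup m m.lt_succ_self, hT.insert (by simp) (hSC ▸ hdisj m m.lt_succ_self)⟩

end Transverse

section Orthogonal

variable {𝕜 E : Type*} [RCLike 𝕜] [NormedAddCommGroup E] [InnerProductSpace 𝕜 E]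
  [FiniteDimensional 𝕜 E]

theorem Submodule.inf_orthogonal_inf_orthogonal_of_le {B B' : Submodule 𝕜 E} (h : B ≤ B') :
    B' ⊓ (B' ⊓ Bᗮ)ᗮ = B := by
  have hB' : B' ⊓ Bᗮ = (B'ᗮ ⊔ B)ᗮ := by rw [← inf_orthogonal, orthogonal_orthogonal]
  rw [hB', orthogonal_orthogonal, sup_comm, inf_comm, sup_inf_assoc_of_le _ h,
    (orthogonal_disjoint B').symm.eq_bot, sup_bot_eq]

theorem Submodule.finrank_inf_orthogonal_add_finrank_s14 {X Y : Submodule 𝕜 E}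
    (h : Disjoint Y Xᗮ) : finrank 𝕜 ↥(X ⊓ Yᗮ) + finrank 𝕜 ↥Y = finrank 𝕜 ↥X := by
  have hXY : X ⊓ Yᗮ = (Xᗮ ⊔ Y)ᗮ := by rw [← inf_orthogonal, orthogonal_orthogonal]
  have h₁ := finrank_add_finrank_orthogonal (Xᗮ ⊔ Y)
  have h₂ := finrank_add_finrank_orthogonal X
  rw [finrank_sup_of_disjoint h.symm] at h₁
  rw [hXY]
  omega

theorem Submodule.orthogonalInverse_extends_complement {A B A' B' R : Submodule 𝕜 E}
    (hB : B ≤ B') (hA' : A' ≤ B') (hmeet : B ⊓ A' = A) (hRA : Disjoint R A) (hRB : R ⊔ A = B) :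
    Disjoint ((B' ⊓ Bᗮ) ⊓ (A' ⊓ Aᗮ)ᗮ) R ∧ Disjoint ((B' ⊓ Bᗮ) ⊓ (A' ⊓ Aᗮ)ᗮ ⊔ R) A' ∧
      (B' ⊓ Bᗮ) ⊓ (A' ⊓ Aᗮ)ᗮ ⊔ R ⊔ A' = B' := by
  set X := B' ⊓ Bᗮ
  set Y := A' ⊓ Aᗮ
  have hAB : A ≤ B := hmeet ▸ inf_le_left
  have hAA' : A ≤ A' := hmeet ▸ inf_le_right
  have hRB' : R ≤ B := hRB ▸ le_sup_left
  have hOB : X ⊓ Yᗮ ≤ Bᗮ := inf_le_left.trans inf_le_right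
  have hOA' : X ⊓ Yᗮ ≤ A'ᗮ := by
    rw [← sup_orthogonal_inf_of_hasOrthogonalProjection hAA', ← inf_orthogonal, inf_comm Aᗮ A']
    exact le_inf (hOB.trans (orthogonal_le hAB)) inf_le_right
  have hYX : Disjoint Y Xᗮ := by
    have hYB : Y ⊓ Xᗮ ≤ B := calc
      Y ⊓ Xᗮ ≤ B' ⊓ Xᗮ := inf_le_inf_right _ (inf_le_left.trans hA')
      _ = B := inf_orthogonal_inf_orthogonal_of_le hB
    rw [disjoint_iff_inf_le]
    calc Y ⊓ Xᗮ ≤ B ⊓ A' ⊓ Aᗮ :=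
          le_inf (le_inf hYB (inf_le_left.trans inf_le_left)) (inf_le_left.trans inf_le_right)
      _ = ⊥ := by rw [hmeet, inf_orthogonal_eq_bot]
  have hRA' : Disjoint R A' := by
    rw [disjoint_iff, ← inf_eq_left.mpr hRB', inf_assoc, hmeet]
    exact hRA.eq_bot
  have hOR : Disjoint (X ⊓ Yᗮ) R := (orthogonal_disjoint B).symm.mono hOB hRB'
  have hORA' : Disjoint (X ⊓ Yᗮ ⊔ R) A' :=
    hRA'.disjoint_sup_left_of_disjoint_sup_right
      ((orthogonal_disjoint (B ⊔ A')).symm.mono (by rw [← inf_orthogonal]; exact le_inf hOB hOA')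
        (sup_le_sup_right hRB' A'))
  refine ⟨hOR, hORA', eq_of_le_of_finrank_eq
    (sup_le (sup_le (inf_le_left.trans inf_le_left) (hRB'.trans hB)) hA') ?_⟩
  have hdimO := finrank_inf_orthogonal_add_finrank_s14 hYX
  have hdimA' : finrank 𝕜 A + finrank 𝕜 Y = finrank 𝕜 A' := by
    rw [← finrank_add_inf_finrank_orthogonal hAA', inf_comm]
  have hdimB' : finrank 𝕜 B + finrank 𝕜 X = finrank 𝕜 B' := by
    rw [← finrank_add_inf_finrank_orthogonal hB, inf_comm]
  have hdimB := finrank_sup_of_disjoint hRA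
  rw [hRB] at hdimB
  rw [finrank_sup_of_disjoint hORA', finrank_sup_of_disjoint hOR]
  omega

theorem isTransverse_row {G H O : ℕ → Submodule 𝕜 E} {r m : ℕ} (hrm : r ≤ m)
    (hdiag : G r ≤ H r) (hOr : O r = H r ⊓ (G r)ᗮ)
    (hH : ∀ b, r ≤ b → b < m → H b ≤ H (b + 1))
    (hGH : ∀ b, r ≤ b → b < m → G (b + 1) ≤ H (b + 1))
    (hmeet : ∀ b, r ≤ b → b < m → H b ⊓ G (b + 1) = G b)
    (hO : ∀ b, r ≤ b → b < m →
      O (b + 1) = (H (b + 1) ⊓ (H b)ᗮ) ⊓ (G (b + 1) ⊓ (G b)ᗮ)ᗮ) :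
    IsTransverse (Icc r m) O ∧ Disjoint (⨆ b ∈ Icc r m, O b) (G m) ∧
      (⨆ b ∈ Icc r m, O b) ⊔ G m = H m := by
  induction m, hrm using Nat.le_induction with
  | base =>
    rw [Icc_self, Finset.iSup_singleton, hOr]
    refine ⟨isTransverse_singleton r O, (orthogonal_disjoint (G r)).symm.mono_left inf_le_right, ?_⟩
    rw [sup_comm, inf_comm, sup_orthogonal_inf_of_hasOrthogonalProjection hdiag]
  | succ m hrm ih =>
    obtain ⟨hT, hD, hS⟩ := ih (fun b h₁ h₂ => hH b h₁ (by omega))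
      (fun b h₁ h₂ => hGH b h₁ (by omega)) (fun b h₁ h₂ => hmeet b h₁ (by omega))
      (fun b h₁ h₂ => hO b h₁ (by omega))
    obtain ⟨hOR, hORG, hORGH⟩ := orthogonalInverse_extends_complement (hH m hrm m.lt_succ_self)
      (hGH m hrm m.lt_succ_self) (hmeet m hrm m.lt_succ_self) hD hS
    rw [← hO m hrm m.lt_succ_self] at hOR hORG hORGH
    rw [← insert_Icc_right_eq_Icc_add_one (by omega), Finset.iSup_insert]
    exact ⟨hT.insert (by simp) hOR, hORG, hORGH⟩

end Orthogonal

/-- An interval `[p_a, p_b]` is encoded as the pair `(a, b)` with `1 ≤ a ≤ b ≤ n + 1`, `a ≤ n`,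
where `b = n + 1` stands for `[p_a, ∞)`. -/
theorem orthogonal_inversion_is_transverse_general
    {V : Type*} [NormedAddCommGroup V] [InnerProductSpace ℝ V] [FiniteDimensional ℝ V]
    (n : ℕ) (F : ℕ → ℕ → Submodule ℝ V)
    (hzero : ∀ b, F 0 b = ⊥)
    (hmono : ∀ a b c d, 1 ≤ a → a ≤ b → b ≤ n + 1 → a ≤ n →
      1 ≤ c → c ≤ d → d ≤ n + 1 → c ≤ n → a ≤ c → b ≤ d → F a b ≤ F c d)
    (hint : ∀ i j, 1 ≤ i → i < j → j ≤ n → F (i + 1) j ⊓ F i (j + 1) = F i j)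
    (OI : ℕ → ℕ → Submodule ℝ V)
    (hOI : ∀ i j, OI i j =
      if i = j then F i i ⊓ (F (i - 1) i)ᗮ
      else (F i j ⊓ (F i (j - 1))ᗮ) ⊓ ((F (i - 1) j ⊓ (F (i - 1) (j - 1))ᗮ))ᗮ) :
    Module.finrank ℝ ↥(⨆ a ∈ Finset.Icc 1 n, ⨆ b ∈ Finset.Icc a (n + 1), OI a b) =
      ∑ a ∈ Finset.Icc 1 n, ∑ b ∈ Finset.Icc a (n + 1),
        Module.finrank ℝ ↥(OI a b) := by
  have hmono₀ : ∀ a b c d, a ≤ c → b ≤ d → a ≤ b → c ≤ d → d ≤ n + 1 → c ≤ n →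
      F a b ≤ F c d := by
    rintro (_ | a) b c d hac hbd hab hcd hd hc
    · rw [hzero]
      exact bot_le
    · exact hmono _ _ _ _ (by omega) hab (by omega) (by omega) (by omega) hcd hd hc hac hbd
  have hmeet₀ : ∀ r b, r < b → b ≤ n → F (r + 1) b ⊓ F r (b + 1) = F r b := by
    rintro (_ | r) b hrb hb
    · simp [hzero]
    · exact hint _ _ (by omega) hrb hb
  have hrow : ∀ r < n, IsTransverse (Icc (r + 1) (n + 1)) (OI (r + 1)) ∧
      Disjoint (⨆ b ∈ Icc (r + 1) (n + 1), OI (r + 1) b) (F r (n + 1)) ∧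
      (⨆ b ∈ Icc (r + 1) (n + 1), OI (r + 1) b) ⊔ F r (n + 1) = F (r + 1) (n + 1) :=
    fun r hr => isTransverse_row (by omega)
      (hmono₀ _ _ _ _ (by omega) le_rfl (by omega) le_rfl (by omega) hr) (by simp [hOI])
      (fun b _ hb => hmono₀ _ _ _ _ le_rfl (by omega) (by omega) (by omega) hb hr)
      (fun b _ hb => hmono₀ _ _ _ _ (by omega) le_rfl (by omega) (by omega) hb hr)
      (fun b hrb hb => hmeet₀ r b (by omega) (by omega))
      (fun b _ _ => by rw [hOI, if_neg (by omega)]; simp)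
  obtain ⟨-, hcol⟩ := isTransverse_Icc_of_sup_eq (S := fun a => ⨆ b ∈ Icc a (n + 1), OI a b)
    (hzero (n + 1)) (fun a ha => (hrow a ha).2.1) (fun a ha => (hrow a ha).2.2)
  rw [hcol]
  refine sum_congr rfl fun a ha => ?_
  obtain ⟨r, rfl⟩ : ∃ r, a = r + 1 := ⟨a - 1, by simp at ha; omega⟩
  exact (hrow r (by simp at ha; omega)).1

/-- In the setting of an intersection-monotone space function
`F̄ : Int(P) → gr(V)` on the intervals of the finite linear order
`P = {p₁ < ⋯ < pₙ}` (intervals encoded as pairs `(a, b)` with `1 ≤ a ≤ b ≤ n + 1`,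
`a ≤ n`, where `b = n + 1` encodes `[p_a, ∞)`, and index-`0` values are the zero
subspace), the family of values of the `×`-Orthogonal Inverse `OI F̄` is a
transverse family: the dimension of the sum of all values equals the sum of their
dimensions. -/
theorem orthogonal_inversion_is_transverse
    {V : Type*} [NormedAddCommGroup V] [InnerProductSpace ℝ V] [FiniteDimensional ℝ V]
    (n : ℕ) (hn : 1 ≤ n) (F : ℕ → ℕ → Submodule ℝ V)
    (hzero : ∀ b, F 0 b = ⊥)
    (hmono : ∀ a b c d, 1 ≤ a → a ≤ b → b ≤ n + 1 → a ≤ n →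
      1 ≤ c → c ≤ d → d ≤ n + 1 → c ≤ n → a ≤ c → b ≤ d → F a b ≤ F c d)
    (hint : ∀ i j, 1 ≤ i → i < j → j ≤ n → F (i + 1) j ⊓ F i (j + 1) = F i j)
    (OI : ℕ → ℕ → Submodule ℝ V)
    (hOI : ∀ i j, OI i j =
      if i = j then F i i ⊓ (F (i - 1) i)ᗮ
      else (F i j ⊓ (F i (j - 1))ᗮ) ⊓ ((F (i - 1) j ⊓ (F (i - 1) (j - 1))ᗮ))ᗮ) :
    Module.finrank ℝ ↥(⨆ a ∈ Finset.Icc 1 n, ⨆ b ∈ Finset.Icc a (n + 1), OI a b) =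
      ∑ a ∈ Finset.Icc 1 n, ∑ b ∈ Finset.Icc a (n + 1),
        Module.finrank ℝ ↥(OI a b) :=
  orthogonal_inversion_is_transverse_general n F hzero hmono hint OI hOI
end

section
/- Let F = {K_i}_{i=1}^n be a filtration of a finite simplicial complex K over P = {p₁ < ⋯ < pₙ} and q ≥ 0. Define the birth-death spaces ZB_q^F([p_i,p_j]) := Z_q(K_i) ∩ B_q(K_j) (cycles of K_i that are boundaries in K_j, viewed in C_q^K) and ZB_q^F([p_i,∞)) := Z_q(K_i), and the Laplacian kernels LK_q^F([p_i,p_j]) := Z_q(K_i) ⊖ (Z_q(K_i) ∩ B_q(K_{j−1})), where X ⊖ Y := X ∩ Y^⊥. Then for every non-diagonal interval [p_i,p_j] with i < j, the ⊇-Orthogonal Inverse of LK_q^F equals the ×-Orthogonal Inverse of ZB_q^F: (LK_q^F([p_i,p_j]) ⊖ LK_q^F([p_i,p_{j+1}])) ⊖ (LK_q^F([p_{i−1},p_j]) ⊖ LK_q^F([p_{i−1},p_{j+1}])) = (ZB_q^F([p_i,p_j]) ⊖ ZB_q^F([p_i,p_{j−1}])) ⊖ (ZB_q^F([p_{i−1},p_j])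 ⊖ ZB_q^F([p_{i−1},p_{j−1}])). -/
/-
Both sides are computed one birth index `a ∈ {i, i - 1}` at a time. With `A = Z a`,
`X = Z a ⊓ Bd (j - 1)` and `Y = Z a ⊓ Bd j ≤ A`, the Laplacian difference is
`(A ⊖ X) ⊖ (A ⊖ Y)` and the birth-death difference is `Y ⊖ X`. These agree because
`A = Y ⊕ (A ⊖ Y)`, so the modular law gives `A ⊖ (A ⊖ Y) = Y`.
-/

namespace Submodule

variable {𝕜 E : Type*} [RCLike 𝕜] [NormedAddCommGroup E] [InnerProductSpace 𝕜 E]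

theorem inf_orthogonal_inf_orthogonal_of_le_s17 {A Y : Submodule 𝕜 E} (h : Y ≤ A)
    [Y.HasOrthogonalProjection] : A ⊓ (A ⊓ Yᗮ)ᗮ = Y := by
  have hY : Y ≤ (Yᗮ ⊓ A)ᗮ := Y.le_orthogonal_orthogonal.trans (orthogonal_le inf_le_left)
  calc A ⊓ (A ⊓ Yᗮ)ᗮ = (Y ⊔ Yᗮ ⊓ A) ⊓ (Yᗮ ⊓ A)ᗮ := by
        rw [inf_comm A Yᗮ, sup_orthogonal_inf_of_hasOrthogonalProjection h]
    _ = Y ⊔ (Yᗮ ⊓ A) ⊓ (Yᗮ ⊓ A)ᗮ := sup_inf_assoc_of_le _ hY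
    _ = Y := by rw [inf_orthogonal_eq_bot, sup_bot_eq]

theorem inf_orthogonal_inf_inf_orthogonal_orthogonal_of_le {A X Y : Submodule 𝕜 E} (h : Y ≤ A)
    [Y.HasOrthogonalProjection] : (A ⊓ Xᗮ) ⊓ (A ⊓ Yᗮ)ᗮ = Y ⊓ Xᗮ := by
  rw [inf_right_comm, inf_orthogonal_inf_orthogonal_of_le_s17 h]

end Submodule

theorem laplacian_inverse_eq_birthdeath_inverse_general {V : Type*}
    [NormedAddCommGroup V] [InnerProductSpace ℝ V] [FiniteDimensional ℝ V]
    (n : ℕ)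
    (Z Bd : ℕ → Submodule ℝ V)
    (ZB LK : ℕ → ℕ → Submodule ℝ V)
    (hZB : ∀ a b, ZB a b = if b ≤ n then Z a ⊓ Bd b else Z a)
    (hLK : ∀ a b, LK a b = Z a ⊓ (Z a ⊓ Bd (b - 1))ᗮ) :
    ∀ i j, 1 ≤ i → i < j → j ≤ n →
      (LK i j ⊓ (LK i (j + 1))ᗮ) ⊓ ((LK (i - 1) j ⊓ (LK (i - 1) (j + 1))ᗮ))ᗮ =
        (ZB i j ⊓ (ZB i (j - 1))ᗮ) ⊓ ((ZB (i - 1) j ⊓ (ZB (i - 1) (j - 1))ᗮ))ᗮ := by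
  intro i j _ _ hjn
  have hdiff (a : ℕ) : LK a j ⊓ (LK a (j + 1))ᗮ = ZB a j ⊓ (ZB a (j - 1))ᗮ := by
    rw [hLK, hLK, hZB, hZB, if_pos hjn, if_pos (j.sub_le 1 |>.trans hjn), Nat.add_sub_cancel]
    exact Submodule.inf_orthogonal_inf_inf_orthogonal_orthogonal_of_le inf_le_left
  rw [hdiff, hdiff]

/-- Let `F = {K_i}_{i=1}^n` be a filtration of a finite simplicial
complex `K` over `P = {p₁ < ⋯ < pₙ}` and `q ≥ 0`.  We model the chain-level data:
`V` is the `q`-th chain group `C_q^K` of the final complex with its standard inner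
product, `V2` and `V0` are the chain groups in degrees `q+1` and `q−1`, `Cp i` and
`Cq i ⊆ V` are the chain subgroups of `K_i` (monotone, with `Cq n = ⊤` since
`K_n = K`, and index-`0` values equal to the zero subspace), and `d1 = ∂_{q+1}`,
`d0 = ∂_q` are the boundary operators (`∂∂ = 0`).  With cycles
`Z a = ker ∂_q^{K_a}`, boundaries `Bd b = Im ∂_{q+1}^{K_b}`, birth-death spaces
`ZB a b = Z a ⊓ Bd b` (and `ZB a (n+1) = Z a` for `[p_a, ∞)`), Laplacian kernels
`LK a b = Z a ⊖ (Z a ⊓ Bd (b−1))`, and `X ⊖ Y := X ⊓ Yᗮ`, the `⊇`-Orthogonal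
Inverse of `LK` equals the `×`-Orthogonal Inverse of `ZB` on every non-diagonal
interval `[p_i, p_j]`, `i < j ≤ n`. -/
theorem laplacian_inverse_eq_birthdeath_inverse {V2 V V0 : Type*}
    [NormedAddCommGroup V2] [InnerProductSpace ℝ V2] [FiniteDimensional ℝ V2]
    [NormedAddCommGroup V] [InnerProductSpace ℝ V] [FiniteDimensional ℝ V]
    [NormedAddCommGroup V0] [InnerProductSpace ℝ V0] [FiniteDimensional ℝ V0]
    (n : ℕ) (hn : 1 ≤ n)
    (Cp : ℕ → Submodule ℝ V2) (Cq : ℕ → Submodule ℝ V)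
    (d1 : V2 →ₗ[ℝ] V) (d0 : V →ₗ[ℝ] V0)
    (hdd : d0 ∘ₗ d1 = 0)
    (hCp0 : Cp 0 = ⊥) (hCq0 : Cq 0 = ⊥)
    (hCp : Monotone Cp) (hCq : Monotone Cq) (hCqn : Cq n = ⊤)
    (hd1 : ∀ i, (Cp i).map d1 ≤ Cq i)
    (Z Bd : ℕ → Submodule ℝ V)
    (hZ : ∀ a, Z a = Cq a ⊓ LinearMap.ker d0)
    (hBd : ∀ b, Bd b = (Cp b).map d1)
    (ZB LK : ℕ → ℕ → Submodule ℝ V)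
    (hZB : ∀ a b, ZB a b = if b ≤ n then Z a ⊓ Bd b else Z a)
    (hLK : ∀ a b, LK a b = Z a ⊓ (Z a ⊓ Bd (b - 1))ᗮ) :
    ∀ i j, 1 ≤ i → i < j → j ≤ n →
      (LK i j ⊓ (LK i (j + 1))ᗮ) ⊓ ((LK (i - 1) j ⊓ (LK (i - 1) (j + 1))ᗮ))ᗮ =
        (ZB i j ⊓ (ZB i (j - 1))ᗮ) ⊓ ((ZB (i - 1) j ⊓ (ZB (i - 1) (j - 1))ᗮ))ᗮ :=
  laplacian_inverse_eq_birthdeath_inverse_general n Z Bd ZB LK hZB hLK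
end

section
/- Let F = {K_i}_{i=1}^n be a filtration of a finite simplicial complex K and q ≥ 0. Let z be a nonzero element of the degree-q Grassmannian persistence diagram space OI ZB_q^F([p_i,p_j]) = ZB_q^F([p_i,p_j]) ⊖ (ZB_q^F([p_{i−1},p_j]) + ZB_q^F([p_i,p_{j−1}])). Then z is a q-cycle born precisely at p_i (its homology class in H_q(K_i) is not in the image of H_q(K_{i−1}) → H_q(K_i)) and it dies precisely at p_j (z ∈ B_q(K_j) but z ∉ B_q(K_{j−1})). -/
/-!
A nonzero `z` in `ZB(i,j) ⊖ (ZB(i−1,j) + ZB(i,j−1))` cannot lie in `ZB(i−1,j) + ZB(i,j−1)`,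
since that space meets its orthogonal complement only in `0`. If `z` died already at `p_{j−1}`,
it would lie in `ZB(i,j−1)`. If `z = z' + b` with `z'` a cycle of `K_{i−1}` and `b` a boundary
of `K_i`, then `z' = z − b` is a boundary of `K_j`, so `z' ∈ ZB(i−1,j)`, while `b ∈ ZB(i,j−1)`
because `i ≤ j − 1` and boundaries are cycles.
-/

theorem Submodule.add_mem_sup_inf_of_add_mem {R M : Type*} [Ring R] [AddCommGroup M]
    [Module R M] {X Y B B' : Submodule R M} {x y : M} (hx : x ∈ X) (hy : y ∈ Y ⊓ B')
    (hyB : y ∈ B) (hxy : x + y ∈ B) : x + y ∈ X ⊓ B ⊔ Y ⊓ B' := by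
  have hxB : x ∈ B := by simpa using B.sub_mem hxy hyB
  exact Submodule.add_mem_sup ⟨hx, hxB⟩ hy

theorem grassmannian_diagram_cycles_born_and_die_precisely_general {V2 V V0 : Type*}
    [NormedAddCommGroup V2] [InnerProductSpace ℝ V2]
    [NormedAddCommGroup V] [InnerProductSpace ℝ V]
    [NormedAddCommGroup V0] [InnerProductSpace ℝ V0]
    (Cp : ℕ → Submodule ℝ V2) (Cq : ℕ → Submodule ℝ V)
    (d1 : V2 →ₗ[ℝ] V) (d0 : V →ₗ[ℝ] V0)
    (hdd : d0 ∘ₗ d1 = 0)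
    (hCp : Monotone Cp)
    (hd1 : ∀ i, (Cp i).map d1 ≤ Cq i)
    (Z Bd : ℕ → Submodule ℝ V)
    (hZ : ∀ a, Z a = Cq a ⊓ LinearMap.ker d0)
    (hBd : ∀ b, Bd b = (Cp b).map d1)
    (ZB : ℕ → ℕ → Submodule ℝ V)
    (hZB : ∀ a b, ZB a b = Z a ⊓ Bd b)
    (i j : ℕ) (hij : i < j)
    (z : V) (hz : z ≠ 0)
    (hmem : z ∈ ZB i j ⊓ (ZB (i - 1) j ⊔ ZB i (j - 1))ᗮ) :
    (¬ ∃ z' b : V, z' ∈ Z (i - 1) ∧ b ∈ Bd i ∧ z = z' + b) ∧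
      z ∈ Bd j ∧ z ∉ Bd (j - 1) := by
  simp only [hZB] at hmem
  obtain ⟨⟨hzZ, hzB⟩, hperp⟩ := hmem
  have hz_notMem : z ∉ Z (i - 1) ⊓ Bd j ⊔ Z i ⊓ Bd (j - 1) := fun h =>
    hz (Submodule.disjoint_def.mp (Submodule.orthogonal_disjoint _) z h hperp)
  have hBd_le_Z (a : ℕ) : Bd a ≤ Z a := by
    rw [hBd, hZ]
    exact le_inf (hd1 a) (LinearMap.map_le_range.trans (LinearMap.range_le_ker_iff.mpr hdd))
  have hBd_mono : Monotone Bd := fun a b hab => by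
    rw [hBd, hBd]
    exact Submodule.map_mono (hCp hab)
  refine ⟨?_, hzB, fun hzB' => hz_notMem (Submodule.mem_sup_right ⟨hzZ, hzB'⟩)⟩
  rintro ⟨z', b, hz', hb, rfl⟩
  exact hz_notMem <| Submodule.add_mem_sup_inf_of_add_mem hz'
    ⟨hBd_le_Z i hb, hBd_mono (by omega) hb⟩ (hBd_mono hij.le hb) hzB

/-- Let `F = {K_i}_{i=1}^n` be a filtration of a finite simplicial
complex `K` and `q ≥ 0`.  We model the chain-level data: `V = C_q^K` with its
standard inner product, `V2` and `V0` the chain groups in degrees `q+1` and `q−1`,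
`Cp i` and `Cq i ⊆ V` the chain subgroups of `K_i` (monotone, index-`0` equal to
the zero subspace), and boundary operators `d1 = ∂_{q+1}`, `d0 = ∂_q` with
`∂∂ = 0`.  With cycles `Z a = ker ∂_q^{K_a}`, boundaries `Bd b = Im ∂_{q+1}^{K_b}`
and birth-death spaces `ZB a b = Z a ⊓ Bd b`, let `z` be a nonzero element of the
degree-`q` Grassmannian persistence diagram space
`OI ZB([p_i,p_j]) = ZB(i,j) ⊖ (ZB(i−1,j) + ZB(i,j−1))` (where `X ⊖ Y := X ⊓ Yᗮ`).
Then `z` is a `q`-cycle born precisely at `p_i` — its homology class in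
`H_q(K_i)` is not in the image of `H_q(K_{i−1}) → H_q(K_i)`, i.e. `z` is not of
the form `z' + b` with `z'` a cycle of `K_{i−1}` and `b` a boundary of `K_i` —
and it dies precisely at `p_j`: `z ∈ B_q(K_j)` but `z ∉ B_q(K_{j−1})`. -/
theorem grassmannian_diagram_cycles_born_and_die_precisely {V2 V V0 : Type*}
    [NormedAddCommGroup V2] [InnerProductSpace ℝ V2] [FiniteDimensional ℝ V2]
    [NormedAddCommGroup V] [InnerProductSpace ℝ V] [FiniteDimensional ℝ V]
    [NormedAddCommGroup V0] [InnerProductSpace ℝ V0] [FiniteDimensional ℝ V0]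
    (n : ℕ) (hn : 1 ≤ n)
    (Cp : ℕ → Submodule ℝ V2) (Cq : ℕ → Submodule ℝ V)
    (d1 : V2 →ₗ[ℝ] V) (d0 : V →ₗ[ℝ] V0)
    (hdd : d0 ∘ₗ d1 = 0)
    (hCp0 : Cp 0 = ⊥) (hCq0 : Cq 0 = ⊥)
    (hCp : Monotone Cp) (hCq : Monotone Cq) (hCqn : Cq n = ⊤)
    (hd1 : ∀ i, (Cp i).map d1 ≤ Cq i)
    (Z Bd : ℕ → Submodule ℝ V)
    (hZ : ∀ a, Z a = Cq a ⊓ LinearMap.ker d0)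
    (hBd : ∀ b, Bd b = (Cp b).map d1)
    (ZB : ℕ → ℕ → Submodule ℝ V)
    (hZB : ∀ a b, ZB a b = Z a ⊓ Bd b)
    (i j : ℕ) (hi : 1 ≤ i) (hij : i < j) (hj : j ≤ n)
    (z : V) (hz : z ≠ 0)
    (hmem : z ∈ ZB i j ⊓ (ZB (i - 1) j ⊔ ZB i (j - 1))ᗮ) :
    (¬ ∃ z' b : V, z' ∈ Z (i - 1) ∧ b ∈ Bd i ∧ z = z' + b) ∧
      z ∈ Bd j ∧ z ∉ Bd (j - 1) :=
  grassmannian_diagram_cycles_born_and_die_precisely_general Cp Cq d1 d0 hdd hCp hd1 Z Bd hZ hBd ZB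
    hZB i j hij z hz hmem
end

section
/- Let P = {p₁ < ⋯ < pₙ} be a finite linear order and G an abelian group. Let m : Int(P) → G and let m' be its restriction to non-diagonal intervals Int(P) ∖ diag(P) ordered by reverse inclusion ([a,b] ≤_⊇ [c,d] iff [a,b] ⊇ [c,d]). Then the Möbius inverse of m' with respect to reverse inclusion satisfies ∂m'([p_i,p_j]) = m([p_i,p_j]) − m([p_i,p_{j+1}]) + m([p_{i−1},p_{j+1}]) − m([p_{i−1},p_j]) for 1 ≤ i < j ≤ n and ∂m'([p_i,∞)) = m([p_i,∞)) − m([p_{i−1},∞)), with the conventions [p_i,p_{n+1}] := [p_i,∞) and index-0 terms equal to 0. -/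
/-!
Möbius inversion for reverse inclusion of intervals is a two-dimensional finite difference: the
intervals containing `[p_c, p_d]` are the `[p_a, p_b]` with `a ≤ c` and `d ≤ b`, so `m` is the sum of
`∂m` over an upper-left rectangle of the index grid, and `∂m` is recovered by the inclusion–exclusion
of four such rectangles. The rectangles reaching the missing row `0` or the missing column `n + 2`
are empty, which is where the conventions for the boundary terms come from.
-/

open Finset

namespace MobiusReverseInclusion

variable {G : Type*} [AddCommGroup G]

def rectSum (f : ℕ → ℕ → G) (N c d : ℕ) : G :=
  ∑ a ∈ Icc 1 c, ∑ b ∈ Icc d N, f a b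

@[simp]
lemma rectSum_zero_left (f : ℕ → ℕ → G) (N d : ℕ) : rectSum f N 0 d = 0 := by
  simp [rectSum]

lemma rectSum_of_lt (f : ℕ → ℕ → G) {N d : ℕ} (c : ℕ) (h : N < d) : rectSum f N c d = 0 := by
  simp [rectSum, Icc_eq_empty_of_lt h]

lemma rectSum_succ_left (f : ℕ → ℕ → G) (N c d : ℕ) :
    rectSum f N (c + 1) d = rectSum f N c d + ∑ b ∈ Icc d N, f (c + 1) b :=
  sum_Icc_succ_top (by omega) _

lemma sum_Icc_eq_add_sum_Icc_succ (g : ℕ → G) {d N : ℕ} (h : d ≤ N) :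
    ∑ b ∈ Icc d N, g b = g d + ∑ b ∈ Icc (d + 1) N, g b := by
  rw [Icc_add_one_left_eq_Ioc, add_sum_Ioc_eq_sum_Icc h]

theorem eq_rectSum_sub (f : ℕ → ℕ → G) {N d : ℕ} (c : ℕ) (h : d ≤ N) :
    f (c + 1) d = rectSum f N (c + 1) d - rectSum f N c d
      - rectSum f N (c + 1) (d + 1) + rectSum f N c (d + 1) := by
  rw [rectSum_succ_left, rectSum_succ_left, sum_Icc_eq_add_sum_Icc_succ _ h]
  abel

end MobiusReverseInclusion

open MobiusReverseInclusion in
/-- The pair `(a, b)` encodes `[p_a, p_b]`, and `b = n + 1` encodes `[p_a, ∞)`, which behaves as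
`[p_a, p_{n+1}]` for a new top element. -/
theorem mobius_inversion_reverse_inclusion_formula_general {G : Type*} [AddCommGroup G]
    (n : ℕ) (m dm : ℕ → ℕ → G)
    (hzero : ∀ b, m 0 b = 0)
    (hinv : ∀ c d, 1 ≤ c → c < d → d ≤ n + 1 →
      ∑ a ∈ Finset.Icc 1 c, ∑ b ∈ Finset.Icc d (n + 1), dm a b = m c d) :
    (∀ i j, 1 ≤ i → i < j → j ≤ n →
        dm i j = m i j - m i (j + 1) + m (i - 1) (j + 1) - m (i - 1) j) ∧
      (∀ i, 1 ≤ i → i ≤ n →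
        dm i (n + 1) = m i (n + 1) - m (i - 1) (n + 1)) := by
  have hrect : ∀ c d, c < d → d ≤ n + 1 → rectSum dm (n + 1) c d = m c d := by
    intro c d hcd hd
    rcases Nat.eq_zero_or_pos c with rfl | hc
    · rw [rectSum_zero_left, hzero]
    · exact hinv c d hc hcd hd
  constructor
  · intro i j hi hij hj
    have h := eq_rectSum_sub dm (i - 1) (by omega : j ≤ n + 1)
    rw [Nat.sub_add_cancel hi] at h
    rw [h, hrect _ _ hij (by omega), hrect _ _ (by omega) (by omega),
      hrect _ _ (by omega) (by omega), hrect _ _ (by omega) (by omega)]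
    abel
  · intro i hi hin
    have h := eq_rectSum_sub dm (i - 1) (le_refl (n + 1))
    rw [Nat.sub_add_cancel hi] at h
    rw [h, hrect _ _ (by omega) le_rfl, hrect _ _ (by omega) le_rfl,
      rectSum_of_lt _ _ (Nat.lt_succ_self _), rectSum_of_lt _ _ (Nat.lt_succ_self _)]
    abel

/-- Let `P = {p₁ < ⋯ < pₙ}` be a finite linear order, `G` an
abelian group and `m : Int(P) → G`, with `m'` its restriction to the non-diagonal
intervals ordered by reverse inclusion.  Intervals are encoded as pairs `(a, b)`
with `1 ≤ a < b ≤ n + 1`, where `b = n + 1` encodes `[p_a, ∞)`; index-`0` terms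
vanish (`hzero`).  For an interval `J = [p_c, p_d]`, the intervals `I ≤_⊇ J` are
those `[p_a, p_b]` with `a ≤ c` and `b ≥ d`.  If `∂m'` is the Möbius inverse of
`m'` with respect to reverse inclusion (`Σ_{I ⊇ J} ∂m'(I) = m(J)` for every
non-diagonal `J`), then `∂m'([p_i,p_j]) = m([p_i,p_j]) − m([p_i,p_{j+1}]) +
m([p_{i−1},p_{j+1}]) − m([p_{i−1},p_j])` for `1 ≤ i < j ≤ n`, and
`∂m'([p_i,∞)) = m([p_i,∞)) − m([p_{i−1},∞))`. -/
theorem mobius_inversion_reverse_inclusion_formula {G : Type*} [AddCommGroup G]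
    (n : ℕ) (hn : 1 ≤ n) (m dm : ℕ → ℕ → G)
    (hzero : ∀ b, m 0 b = 0)
    (hinv : ∀ c d, 1 ≤ c → c < d → d ≤ n + 1 →
      ∑ a ∈ Finset.Icc 1 c, ∑ b ∈ Finset.Icc d (n + 1), dm a b = m c d) :
    (∀ i j, 1 ≤ i → i < j → j ≤ n →
        dm i j = m i j - m i (j + 1) + m (i - 1) (j + 1) - m (i - 1) j) ∧
      (∀ i, 1 ≤ i → i ≤ n →
        dm i (n + 1) = m i (n + 1) - m (i - 1) (n + 1)) :=
  mobius_inversion_reverse_inclusion_formula_general n m dm hzero hinv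
end
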